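/- Let n ≥ 1, 1 ≤ q < ∞, γ ∈ ℝ, let A be an invertible n×n real matrix, and let ℓ, Θ ∈ ℤ satisfy 2^{ℓ-1} < ‖A‖ ≤ 2^{ℓ}, Θ ≤ 0, and ‖A‖·‖A^{-1}‖ < 2^{-Θ}. Then for every measurable f : ℝ^n → ℂ and every k ∈ ℤ: (∫_{C_k} |f(Ax)|^{q}·|x|^{γq} dx)^{1/q} ≤ max{‖A‖^{-γ}, ‖A^{-1}‖^{γ}}·|det(A^{-1})|^{1/q}·Σ_{r=Θ-1}^{0} (∫_{C_{k+ℓ+r}} |f(z)|^{q}·|z|^{γq} dz)^{1/q}. -/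

import Mathlib

open MeasureTheory ENNReal Real BigOperators Finset Matrix

noncomputable section

/-- Euclidean norm on `Fin n → ℝ`. -/
def eNorm {n : ℕ} (x : Fin n → ℝ) : ℝ := Real.sqrt (∑ i, x i ^ 2)

/-- Frobenius norm of an `n × n` real matrix. -/
def frob {n : ℕ} (A : Matrix (Fin n) (Fin n) ℝ) : ℝ := Real.sqrt (∑ i, ∑ j, A i j ^ 2)

/-- The dyadic annulus `C_k = {x : 2^(k-1) < |x| ≤ 2^k}`. -/
def Ck (n : ℕ) (k : ℤ) : Set (Fin n → ℝ) :=
  {x | (2 : ℝ) ^ (k - 1) < eNorm x ∧ eNorm x ≤ (2 : ℝ) ^ k}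

lemma eNorm_nonneg' {n : ℕ} (x : Fin n → ℝ) : 0 ≤ eNorm x := Real.sqrt_nonneg _
lemma frob_nonneg' {n : ℕ} (A : Matrix (Fin n) (Fin n) ℝ) : 0 ≤ frob A := Real.sqrt_nonneg _

lemma continuous_eNorm' {n : ℕ} : Continuous (eNorm (n := n)) := by
  unfold eNorm
  exact Real.continuous_sqrt.comp (continuous_finset_sum _ fun i _ => (continuous_apply i).pow 2)

lemma measurableSet_Ck' {n : ℕ} (k : ℤ) : MeasurableSet (Ck n k) := by
  have h := continuous_eNorm' (n := n) |>.measurable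
  exact (measurableSet_lt measurable_const h).inter (measurableSet_le h measurable_const)

lemma eNorm_mulVec_le' {n : ℕ} (A : Matrix (Fin n) (Fin n) ℝ) (x : Fin n → ℝ) :
    eNorm (A.mulVec x) ≤ frob A * eNorm x := by
  have h1 : ∑ i, (A.mulVec x i) ^ 2 ≤ (∑ i, ∑ j, A i j ^ 2) * (∑ j, x j ^ 2) := by
    rw [Finset.sum_mul]
    refine Finset.sum_le_sum fun i _ => ?_
    simpa [Matrix.mulVec, dotProduct] using
      Finset.sum_mul_sq_le_sq_mul_sq Finset.univ (fun j => A i j) x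
  calc eNorm (A.mulVec x) ≤ Real.sqrt ((∑ i, ∑ j, A i j ^ 2) * (∑ j, x j ^ 2)) :=
        Real.sqrt_le_sqrt h1
    _ = frob A * eNorm x := by rw [Real.sqrt_mul (by positivity)]; rfl

lemma exists_annulus' (a b : ℤ) (y : ℝ) (h1 : (2:ℝ) ^ (a-1) < y) (h2 : y ≤ (2:ℝ) ^ b) :
    ∃ m : ℤ, a ≤ m ∧ m ≤ b ∧ (2:ℝ) ^ (m-1) < y ∧ y ≤ (2:ℝ) ^ m := by
  have hy : 0 < y := lt_trans (_root_.zpow_pos two_pos _) h1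
  set L := Real.logb 2 y with hL
  refine ⟨⌈L⌉, ?_, ?_, ?_, ?_⟩
  · have h' : (2:ℝ) ^ ((a:ℝ) - 1) < y := by
      rw [show ((a:ℝ) - 1) = ((a - 1 : ℤ) : ℝ) by push_cast; ring, Real.rpow_intCast]; exact h1
    have hlt : (a:ℝ) - 1 < L := by
      have := Real.logb_lt_logb (b := 2) one_lt_two (rpow_pos_of_pos two_pos _) h'
      rwa [Real.logb_rpow two_pos (by norm_num)] at this
    have h'' : (a:ℝ) - 1 < (⌈L⌉ : ℝ) := lt_of_lt_of_le hlt (Int.le_ceil L)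
    have h3 : a - 1 < ⌈L⌉ := by exact_mod_cast h''
    omega
  · apply Int.ceil_le.mpr
    have h' : L ≤ Real.logb 2 ((2:ℝ) ^ b) := Real.logb_le_logb_of_le one_lt_two hy h2
    rwa [← Real.rpow_intCast 2 b, Real.logb_rpow two_pos (by norm_num)] at h'
  · have h' : (⌈L⌉ : ℝ) - 1 < L := by
      have := Int.ceil_lt_add_one L; linarith
    have h2' : (2:ℝ) ^ ((⌈L⌉ : ℝ) - 1) < (2:ℝ) ^ L := Real.rpow_lt_rpow_of_exponent_lt one_lt_two h'
    rw [Real.rpow_logb two_pos (by norm_num) hy] at h2'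
    rw [← Real.rpow_intCast]
    push_cast
    exact h2'
  · have h' : (2:ℝ) ^ L ≤ (2:ℝ) ^ ((⌈L⌉:ℤ) : ℝ) :=
      Real.rpow_le_rpow_of_exponent_le one_le_two (Int.le_ceil L)
    rwa [Real.rpow_logb two_pos (by norm_num) hy, Real.rpow_intCast] at h'

lemma lintegral_finset_biUnion_le' {α : Type*} [MeasurableSpace α] (μ : Measure α) {ι : Type*} [DecidableEq ι]
    (s : Finset ι) (t : ι → Set α) (g : α → ℝ≥0∞) :
    ∫⁻ x in ⋃ i ∈ s, t i, g x ∂μ ≤ ∑ i ∈ s, ∫⁻ x in t i, g x ∂μ := by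
  induction s using Finset.cons_induction with
  | empty => simp
  | cons a s ha ih =>
    rw [Finset.sum_cons, Finset.cons_eq_insert, Finset.set_biUnion_insert]
    exact (lintegral_union_le _ _ _).trans (add_le_add le_rfl ih)

lemma ennreal_rpow_sum_le' {ι : Type*} (s : Finset ι) (g : ι → ℝ≥0∞) {p : ℝ}
    (hp : 0 < p) (hp1 : p ≤ 1) : (∑ i ∈ s, g i) ^ p ≤ ∑ i ∈ s, g i ^ p := by
  induction s using Finset.cons_induction with
  | empty => simp [ENNReal.zero_rpow_of_pos hp]
  | cons a s ha ih =>
    rw [Finset.sum_cons, Finset.sum_cons]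
    exact (ENNReal.rpow_add_le_add_rpow _ _ hp.le hp1).trans (add_le_add le_rfl ih)

/-- Dilation estimate for weighted `L^q` norms over annuli:
`(∫_{C_k} |f(Ax)|^q |x|^(γq) dx)^(1/q) ≤ max{‖A‖^(-γ),‖A⁻¹‖^γ} · |det A⁻¹|^(1/q) ·
  Σ_{r=Θ-1}^{0} (∫_{C_{k+ℓ+r}} |f|^q |z|^(γq) dz)^(1/q)`. -/
theorem hausdorff_stmt9 (n : ℕ) (hn : 1 ≤ n) (q γ : ℝ) (hq : 1 ≤ q)
    (A : Matrix (Fin n) (Fin n) ℝ) (hA : IsUnit A.det) (ℓ Θ : ℤ)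
    (hl1 : (2 : ℝ) ^ (ℓ - 1) < frob A) (hl2 : frob A ≤ (2 : ℝ) ^ ℓ)
    (hΘ0 : Θ ≤ 0) (hΘ : frob A * frob A⁻¹ < (2 : ℝ) ^ (-Θ))
    (f : (Fin n → ℝ) → ℂ) (hf : Measurable f) (k : ℤ) :
    (∫⁻ x in Ck n k,
        ENNReal.ofReal (‖f (A.mulVec x)‖ ^ q * eNorm x ^ (γ * q))) ^ (1 / q) ≤
      ENNReal.ofReal (max (frob A ^ (-γ)) (frob A⁻¹ ^ γ) * |(A⁻¹).det| ^ (1 / q)) *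
        ∑ r ∈ Finset.Icc (Θ - 1) 0,
          (∫⁻ z in Ck n (k + ℓ + r),
            ENNReal.ofReal (‖f z‖ ^ q * eNorm z ^ (γ * q))) ^ (1 / q) := by
  have hq0 : (0:ℝ) < q := lt_of_lt_of_le one_pos hq
  have hdet : A.det ≠ 0 := hA.ne_zero
  have hAinv : A⁻¹ * A = 1 := Matrix.nonsing_inv_mul A hA
  have hfrobA : 0 < frob A := lt_trans (_root_.zpow_pos two_pos _) hl1
  have key2 : ∀ x : Fin n → ℝ, eNorm x ≤ frob A⁻¹ * eNorm (A.mulVec x) := by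
    intro x
    have h := eNorm_mulVec_le' A⁻¹ (A.mulVec x)
    rwa [Matrix.mulVec_mulVec, hAinv, Matrix.one_mulVec] at h
  have hfrobAi : 0 < frob A⁻¹ := by
    rcases (frob_nonneg' A⁻¹).lt_or_eq with h | h
    · exact h
    · exfalso
      have h1 : eNorm (fun _ : Fin n => (1:ℝ)) ≤ 0 := by
        have := key2 (fun _ => 1)
        rw [← h] at this
        nlinarith [eNorm_nonneg' (A⁻¹ᵀ.mulVec (fun _ : Fin n => (1:ℝ)))]
      have h2 : eNorm (fun _ : Fin n => (1:ℝ)) = Real.sqrt n := by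
        simp [eNorm]
      rw [h2] at h1
      have : (0:ℝ) < Real.sqrt n := Real.sqrt_pos.mpr (by exact_mod_cast hn)
      linarith
  set M := max (frob A ^ (-γ)) (frob A⁻¹ ^ γ) with hMdef
  have hM : 0 < M := lt_max_of_lt_left (Real.rpow_pos_of_pos hfrobA _)
  set g : (Fin n → ℝ) → ℝ≥0∞ :=
    fun z => ENNReal.ofReal (‖f z‖ ^ q * eNorm z ^ (γ * q)) with hgdef
  set S : Set (Fin n → ℝ) := ⋃ r ∈ Finset.Icc (Θ - 1) 0, Ck n (k + ℓ + r) with hSdef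
  have hS : MeasurableSet S := by
    exact MeasurableSet.biUnion (Finset.countable_toSet _) fun r _ => measurableSet_Ck' _
  have hg : Measurable g := by
    have h1 : Measurable fun z => ‖f z‖ ^ q := by
      exact hf.norm.pow measurable_const
    have h2 : Measurable fun z : Fin n → ℝ => eNorm z ^ (γ * q) :=
      (continuous_eNorm'.measurable).pow measurable_const
    exact (h1.mul h2).ennreal_ofReal
  -- annulus membership and positivity on C_k
  have hzpos : ∀ x ∈ Ck n k, 0 < eNorm x ∧ 0 < eNorm (A.mulVec x) := by
    intro x hx
    have hx0 : 0 < eNorm x := lt_trans (_root_.zpow_pos two_pos _) hx.1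
    refine ⟨hx0, ?_⟩
    have := lt_of_lt_of_le hx0 (key2 x)
    nlinarith [eNorm_nonneg' (A.mulVec x)]
  have hmem : ∀ x ∈ Ck n k, A.mulVec x ∈ S := by
    intro x hx
    obtain ⟨hx0, hz0⟩ := hzpos x hx
    have hupper : eNorm (A.mulVec x) ≤ (2:ℝ) ^ (k + ℓ) := by
      calc eNorm (A.mulVec x) ≤ frob A * eNorm x := eNorm_mulVec_le' A x
        _ ≤ (2:ℝ) ^ ℓ * (2:ℝ) ^ k := by
            exact mul_le_mul hl2 hx.2 (eNorm_nonneg' x) (_root_.zpow_pos two_pos _).le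
        _ = (2:ℝ) ^ (k + ℓ) := by rw [← zpow_add₀ (two_ne_zero)]; ring_nf
    have hAi_lt : frob A⁻¹ < (2:ℝ) ^ (-Θ - ℓ + 1) := by
      have h3 : frob A⁻¹ * (2:ℝ) ^ (ℓ - 1) < (2:ℝ) ^ (-Θ) := by nlinarith
      have h4 : frob A⁻¹ < (2:ℝ) ^ (-Θ) / (2:ℝ) ^ (ℓ - 1) :=
        (lt_div_iff₀ (_root_.zpow_pos two_pos _)).mpr h3
      rwa [← zpow_sub₀ (two_ne_zero), show -Θ - (ℓ - 1) = -Θ - ℓ + 1 by ring] at h4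
    have hlower : (2:ℝ) ^ (k + ℓ + (Θ - 1) - 1) < eNorm (A.mulVec x) := by
      have h4 : (2:ℝ) ^ (k - 1) < (2:ℝ) ^ (-Θ - ℓ + 1) * eNorm (A.mulVec x) := by
        calc (2:ℝ) ^ (k - 1) < eNorm x := hx.1
          _ ≤ frob A⁻¹ * eNorm (A.mulVec x) := key2 x
          _ < (2:ℝ) ^ (-Θ - ℓ + 1) * eNorm (A.mulVec x) :=
              mul_lt_mul_of_pos_right hAi_lt hz0
      have h5 : (2:ℝ) ^ (k - 1) / (2:ℝ) ^ (-Θ - ℓ + 1) < eNorm (A.mulVec x) :=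
        (div_lt_iff₀ (_root_.zpow_pos two_pos _)).mpr (by linarith [h4])
      rwa [← zpow_sub₀ (two_ne_zero),
        show k - 1 - (-Θ - ℓ + 1) = k + ℓ + (Θ - 1) - 1 by ring] at h5
    obtain ⟨m, hm1, hm2, hm3, hm4⟩ :=
      exists_annulus' (k + ℓ + (Θ - 1)) (k + ℓ) (eNorm (A.mulVec x)) hlower hupper
    refine Set.mem_iUnion₂.mpr ⟨m - (k + ℓ), ?_, ?_⟩
    · simp only [Finset.mem_Icc]; omega
    · rw [show k + ℓ + (m - (k + ℓ)) = m by ring]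
      exact ⟨hm3, hm4⟩
  -- weight estimate
  have hweight : ∀ x ∈ Ck n k,
      eNorm x ^ (γ * q) ≤ M ^ q * eNorm (A.mulVec x) ^ (γ * q) := by
    intro x hx
    obtain ⟨hx0, hz0⟩ := hzpos x hx
    have hstep : eNorm x ^ γ ≤ M * eNorm (A.mulVec x) ^ γ := by
      rcases le_or_gt 0 γ with hγ | hγ
      · calc eNorm x ^ γ ≤ (frob A⁻¹ * eNorm (A.mulVec x)) ^ γ :=
              Real.rpow_le_rpow hx0.le (key2 x) hγ
          _ = frob A⁻¹ ^ γ * eNorm (A.mulVec x) ^ γ :=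
              Real.mul_rpow hfrobAi.le (eNorm_nonneg' _)
          _ ≤ M * eNorm (A.mulVec x) ^ γ :=
              mul_le_mul_of_nonneg_right (le_max_right _ _) (Real.rpow_nonneg (eNorm_nonneg' _) γ)
      · have hdiv : eNorm (A.mulVec x) / frob A ≤ eNorm x := by
          rw [div_le_iff₀ hfrobA]
          calc eNorm (A.mulVec x) ≤ frob A * eNorm x := eNorm_mulVec_le' A x
            _ = eNorm x * frob A := by ring
        calc eNorm x ^ γ ≤ (eNorm (A.mulVec x) / frob A) ^ γ :=
              Real.rpow_le_rpow_of_nonpos (by positivity) hdiv hγ.le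
          _ = eNorm (A.mulVec x) ^ γ * frob A ^ (-γ) := by
              rw [Real.div_rpow hz0.le hfrobA.le, Real.rpow_neg hfrobA.le, div_eq_mul_inv]
          _ ≤ M * eNorm (A.mulVec x) ^ γ := by
              rw [mul_comm]
              exact mul_le_mul_of_nonneg_right (le_max_left _ _)
                (Real.rpow_nonneg (eNorm_nonneg' _) γ)
    calc eNorm x ^ (γ * q) = (eNorm x ^ γ) ^ q := Real.rpow_mul hx0.le γ q
      _ ≤ (M * eNorm (A.mulVec x) ^ γ) ^ q :=
          Real.rpow_le_rpow (by positivity) hstep hq0.le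
      _ = M ^ q * (eNorm (A.mulVec x) ^ γ) ^ q :=
          Real.mul_rpow hM.le (Real.rpow_nonneg (eNorm_nonneg' _) γ)
      _ = M ^ q * eNorm (A.mulVec x) ^ (γ * q) := by
          rw [← Real.rpow_mul (eNorm_nonneg' _)]
  -- change of variables
  have hT : Measurable (Matrix.toLin' A) := (LinearMap.continuous_on_pi _).measurable
  have hGmeas : Measurable (S.indicator g) := hg.indicator hS
  have step3 : ∫⁻ x, S.indicator g (A.mulVec x) =
      ENNReal.ofReal |(A⁻¹).det| * ∫⁻ z, S.indicator g z := by
    have hdetinv : |(A⁻¹).det| = |A.det⁻¹| := by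
      rw [Matrix.det_nonsing_inv, Ring.inverse_eq_inv]
    calc ∫⁻ x, S.indicator g (A.mulVec x)
        = ∫⁻ x, S.indicator g (Matrix.toLin' A x) := by simp only [Matrix.toLin'_apply]
      _ = ∫⁻ z, S.indicator g z ∂(Measure.map (Matrix.toLin' A) volume) :=
          (lintegral_map hGmeas hT).symm
      _ = ∫⁻ z, S.indicator g z ∂(ENNReal.ofReal |A.det⁻¹| • volume) := by
          rw [Real.map_matrix_volume_pi_eq_smul_volume_pi hdet]
      _ = ENNReal.ofReal |(A⁻¹).det| * ∫⁻ z, S.indicator g z := by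
          rw [lintegral_smul_measure, hdetinv, smul_eq_mul]
  have step4 : ∫⁻ z, S.indicator g z ≤
      ∑ r ∈ Finset.Icc (Θ - 1) 0, ∫⁻ z in Ck n (k + ℓ + r), g z := by
    rw [lintegral_indicator hS]
    exact lintegral_finset_biUnion_le' volume _ _ g
  have main : (∫⁻ x in Ck n k,
      ENNReal.ofReal (‖f (A.mulVec x)‖ ^ q * eNorm x ^ (γ * q))) ≤
      ENNReal.ofReal (M ^ q) * (ENNReal.ofReal |(A⁻¹).det| *
        ∑ r ∈ Finset.Icc (Θ - 1) 0, ∫⁻ z in Ck n (k + ℓ + r), g z) := by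
    calc (∫⁻ x in Ck n k,
        ENNReal.ofReal (‖f (A.mulVec x)‖ ^ q * eNorm x ^ (γ * q)))
        = ∫⁻ x, (Ck n k).indicator
            (fun x => ENNReal.ofReal (‖f (A.mulVec x)‖ ^ q * eNorm x ^ (γ * q))) x :=
          (lintegral_indicator (measurableSet_Ck' k) _).symm
      _ ≤ ∫⁻ x, ENNReal.ofReal (M ^ q) * S.indicator g (A.mulVec x) := by
          refine lintegral_mono fun x => ?_
          by_cases hx : x ∈ Ck n k
          · rw [Set.indicator_of_mem hx, Set.indicator_of_mem (hmem x hx), hgdef]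
            rw [← ENNReal.ofReal_mul (by positivity : (0:ℝ) ≤ M ^ q)]
            apply ENNReal.ofReal_le_ofReal
            calc ‖f (A.mulVec x)‖ ^ q * eNorm x ^ (γ * q)
                ≤ ‖f (A.mulVec x)‖ ^ q *
                    (M ^ q * eNorm (A.mulVec x) ^ (γ * q)) := by
                  exact mul_le_mul_of_nonneg_left (hweight x hx)
                    (Real.rpow_nonneg (norm_nonneg _) q)
              _ = M ^ q * (‖f (A.mulVec x)‖ ^ q * eNorm (A.mulVec x) ^ (γ * q)) := by
                  ring
          · rw [Set.indicator_of_notMem hx]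
            exact zero_le
      _ = ENNReal.ofReal (M ^ q) * ∫⁻ x, S.indicator g (A.mulVec x) := by
          rw [lintegral_const_mul]
          have : Measurable fun x => S.indicator g (A.mulVec x) := by
            have := hGmeas.comp hT
            simpa only [Matrix.toLin'_apply, Function.comp_def] using this
          exact this
      _ = ENNReal.ofReal (M ^ q) * (ENNReal.ofReal |(A⁻¹).det| * ∫⁻ z, S.indicator g z) := by
          rw [step3]
      _ ≤ _ := by
          gcongr
  -- final rpow manipulation
  have hp0 : (0:ℝ) < 1 / q := by positivity
  have hp1 : 1 / q ≤ 1 := by rw [div_le_one hq0]; exact hq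
  have hMQ : (ENNReal.ofReal (M ^ q)) ^ (1/q) = ENNReal.ofReal M := by
    rw [← ENNReal.ofReal_rpow_of_pos hM, ← ENNReal.rpow_mul, mul_one_div_cancel hq0.ne',
      ENNReal.rpow_one]
  calc (∫⁻ x in Ck n k,
      ENNReal.ofReal (‖f (A.mulVec x)‖ ^ q * eNorm x ^ (γ * q))) ^ (1 / q)
      ≤ (ENNReal.ofReal (M ^ q) * (ENNReal.ofReal |(A⁻¹).det| *
          ∑ r ∈ Finset.Icc (Θ - 1) 0, ∫⁻ z in Ck n (k + ℓ + r), g z)) ^ (1 / q) :=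
        ENNReal.rpow_le_rpow main hp0.le
    _ = (ENNReal.ofReal (M ^ q)) ^ (1/q) * ((ENNReal.ofReal |(A⁻¹).det|) ^ (1/q) *
          (∑ r ∈ Finset.Icc (Θ - 1) 0, ∫⁻ z in Ck n (k + ℓ + r), g z) ^ (1/q)) := by
        rw [ENNReal.mul_rpow_of_nonneg _ _ hp0.le, ENNReal.mul_rpow_of_nonneg _ _ hp0.le]
    _ ≤ ENNReal.ofReal M * (ENNReal.ofReal (|(A⁻¹).det| ^ (1/q)) *
          ∑ r ∈ Finset.Icc (Θ - 1) 0,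
            (∫⁻ z in Ck n (k + ℓ + r), g z) ^ (1/q)) := by
        rw [hMQ, ENNReal.ofReal_rpow_of_nonneg (abs_nonneg _) hp0.le]
        gcongr
        exact ennreal_rpow_sum_le' _ _ hp0 hp1
    _ = ENNReal.ofReal (M * |(A⁻¹).det| ^ (1/q)) *
          ∑ r ∈ Finset.Icc (Θ - 1) 0,
            (∫⁻ z in Ck n (k + ℓ + r), g z) ^ (1/q) := by
        rw [ENNReal.ofReal_mul hM.le, mul_assoc]
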